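/- Let h : ℝ² → ℝ² be defined by h(u,v) = (1 + u·v + v², (−2 + u² + 6v² + u·v·(3 + v²))/2). Then the topological boundary (frontier) in ℝ² of the compact set h([−2,2] × [−2,2]) equals the Jordan curve γ = γ₁ ∪ γ₂, where γ₁ = {((1 + 2cos θ)², (1 + 2cos θ)³) : θ ∈ ℝ} and γ₂ = {(5 + 4cos θ, 11 + 14cos θ + 2(cos θ)²) : θ ∈ ℝ}. -/
import Mathlib

open Set Real
set_option maxHeartbeats 1000000
noncomputable section
def Aset : Set (ℝ × ℝ) :=
  {w | 0 ≤ w.1 ∧ w.2 ^ 2 ≤ w.1 ^ 3 ∧ w.1 ^ 2 + 18 * w.1 - 27 ≤ 8 * w.2}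

def Gam : Set (ℝ × ℝ) :=
  {w : ℝ × ℝ | ∃ θ : ℝ,
      w = ((1 + 2 * Real.cos θ) ^ 2, (1 + 2 * Real.cos θ) ^ 3)} ∪
  {w : ℝ × ℝ | ∃ θ : ℝ,
      w = (5 + 4 * Real.cos θ, 11 + 14 * Real.cos θ + 2 * Real.cos θ ^ 2)}

lemma Aset_closed : IsClosed Aset := by
  have : Aset = {w : ℝ × ℝ | 0 ≤ w.1} ∩ ({w | w.2 ^ 2 ≤ w.1 ^ 3} ∩ {w | w.1 ^ 2 + 18 * w.1 - 27 ≤ 8 * w.2}) := by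
    ext w; simp [Aset, and_assoc]
  rw [this]
  exact (isClosed_le continuous_const continuous_fst).inter
    ((isClosed_le (by fun_prop) (by fun_prop)).inter (isClosed_le (by fun_prop) (by fun_prop)))

lemma img_sub : (fun uv : ℝ × ℝ =>
        ((1 + uv.1 * uv.2 + uv.2 ^ 2,
          (-2 + uv.1 ^ 2 + 6 * uv.2 ^ 2 + uv.1 * uv.2 * (3 + uv.2 ^ 2)) / 2) : ℝ × ℝ)) ''
        (Set.Icc (-2 : ℝ) 2 ×ˢ Set.Icc (-2 : ℝ) 2) ⊆ Aset := by
  rintro w ⟨⟨u, v⟩, ⟨⟨hu1, hu2⟩, hv1, hv2⟩, rfl⟩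
  have h4u : 0 ≤ 4 - u ^ 2 := by nlinarith
  have h4v : 0 ≤ 4 - v ^ 2 := by nlinarith
  refine ⟨by nlinarith [sq_nonneg (u + 2*v)], ?_, ?_⟩
  · have key : (1 + u * v + v ^ 2) ^ 3
        - ((-2 + u ^ 2 + 6 * v ^ 2 + u * v * (3 + v ^ 2)) / 2) ^ 2
        = (4 - u ^ 2) * (u - v ^ 3 + 3 * v) ^ 2 / 4 := by ring
    nlinarith [mul_nonneg h4u (sq_nonneg (u - v ^ 3 + 3 * v))]
  · have key : 8 * ((-2 + u ^ 2 + 6 * v ^ 2 + u * v * (3 + v ^ 2)) / 2)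
        - (1 + u * v + v ^ 2) ^ 2 - 18 * (1 + u * v + v ^ 2) + 27
        = (4 - v ^ 2) * (u - v) ^ 2 := by ring
    nlinarith [mul_nonneg h4v (sq_nonneg (u - v))]

lemma sub_img : Aset ⊆ (fun uv : ℝ × ℝ =>
        ((1 + uv.1 * uv.2 + uv.2 ^ 2,
          (-2 + uv.1 ^ 2 + 6 * uv.2 ^ 2 + uv.1 * uv.2 * (3 + uv.2 ^ 2)) / 2) : ℝ × ℝ)) ''
        (Set.Icc (-2 : ℝ) 2 ×ˢ Set.Icc (-2 : ℝ) 2) := by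
  rintro ⟨x, y⟩ ⟨hx0, hyx, hq⟩
  simp only at hx0 hyx hq
  set s := Real.sqrt x with hs
  have hs0 : 0 ≤ s := Real.sqrt_nonneg x
  have hs2 : s ^ 2 = x := Real.sq_sqrt hx0
  have hx3 : x ^ 3 = (s ^ 3) ^ 2 := by rw [← hs2]; ring
  have hs30 : 0 ≤ s ^ 3 := pow_nonneg hs0 3
  have hys : y ≤ s ^ 3 := by nlinarith [hx3, hs30]
  have hx9 : x ≤ 9 := by
    by_contra hgt
    push_neg at hgt
    have hs3 : 3 < s := by nlinarith
    nlinarith [mul_pos (pow_pos (by linarith : (0:ℝ) < s - 3) 3) (by linarith : (0:ℝ) < s + 1)]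
  rcases lt_trichotomy x 1 with hx1 | hx1 | hx1
  · -- 0 ≤ x < 1, path v ∈ [1-s, 1+s]
    have hs1 : s < 1 := by nlinarith
    have hvpos : 0 < 1 - s := by linarith
    set g : ℝ → ℝ := fun v =>
      (-2 + ((x - 1 - v ^ 2) / v) ^ 2 + 6 * v ^ 2 + (x - 1 - v ^ 2) * (3 + v ^ 2)) / 2 with hg
    have hcont : ContinuousOn g (Icc (1 - s) (1 + s)) := by
      intro v hv
      have hv0 : v ≠ 0 := by have := hv.1; intro h; rw [h] at this; linarith
      apply ContinuousAt.continuousWithinAt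
      have h1 : ContinuousAt (fun v : ℝ => (x - 1 - v ^ 2) / v) v :=
        ContinuousAt.div (by fun_prop) continuousAt_id hv0
      exact (((continuousAt_const.add (h1.pow 2)).add (by fun_prop)).add
        ((by fun_prop : ContinuousAt (fun v : ℝ => x - 1 - v ^ 2) v).mul (by fun_prop))).div_const 2
    have hga : g (1 - s) = s ^ 3 := by
      have h0 : (1 : ℝ) - s ≠ 0 := ne_of_gt hvpos
      rw [hg]; simp only; rw [← hs2]; field_simp; ring
    have hgb : g (1 + s) = -s ^ 3 := by
      have h0 : (1 : ℝ) + s ≠ 0 := by positivity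
      rw [hg]; simp only; rw [← hs2]; field_simp; ring
    have hyl : -s ^ 3 ≤ y := by nlinarith [hx3, hs30]
    have hmem : y ∈ Icc (g (1 + s)) (g (1 - s)) := by rw [hga, hgb]; exact ⟨hyl, hys⟩
    obtain ⟨v, hv, hgv⟩ := intermediate_value_Icc' (by linarith : 1 - s ≤ 1 + s) hcont hmem
    have hv0 : 0 < v := lt_of_lt_of_le hvpos hv.1
    have huv : (x - 1 - v ^ 2) / v * v = x - 1 - v ^ 2 := div_mul_cancel₀ _ (ne_of_gt hv0)
    refine ⟨((x - 1 - v ^ 2) / v, v), ⟨⟨?_, ?_⟩, by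
      constructor <;> [linarith [hv.1]; linarith [hv.2]]⟩, ?_⟩
    · rw [le_div_iff₀ hv0]; nlinarith [hv.1, hv.2]
    · rw [div_le_iff₀ hv0]; nlinarith [hv.1, hv.2]
    · simp only [Prod.mk.injEq]
      constructor
      · rw [huv]; ring
      · rw [show (x - 1 - v ^ 2) / v * v * (3 + v ^ 2) = (x - 1 - v ^ 2) * (3 + v ^ 2) by
          rw [huv]]
        simp only [hg] at hgv
        exact hgv
  · -- x = 1
    subst hx1
    have hy1 : y ≤ 1 := by nlinarith
    have hy2 : -1 ≤ y := by nlinarith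
    set r := Real.sqrt (2 - 2 * y) with hrdef
    have hr0 : 0 ≤ r := Real.sqrt_nonneg _
    have hr2 : r ^ 2 = 2 - 2 * y := Real.sq_sqrt (by linarith)
    have hrle : r ≤ 2 := by nlinarith
    set v := Real.sqrt (2 - r) with hvdef
    have hv0 : 0 ≤ v := Real.sqrt_nonneg _
    have hv2 : v ^ 2 = 2 - r := Real.sq_sqrt (by linarith)
    have hvle : v ≤ 2 := by nlinarith
    refine ⟨(-v, v), ⟨⟨show (-2:ℝ) ≤ -v by linarith, show -v ≤ (2:ℝ) by linarith⟩,
      ⟨show (-2:ℝ) ≤ v by linarith, show v ≤ (2:ℝ) by linarith⟩⟩, ?_⟩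
    simp only [Prod.mk.injEq]
    constructor
    · ring
    · linear_combination (-(v^2-2-r)/2) * hv2 + (-1/2) * hr2
  · -- 1 < x ≤ 9, path v ∈ [s-1, 2]
    have hs1 : 1 < s := by nlinarith
    have hs3 : s ≤ 3 := by nlinarith
    have hvpos : 0 < s - 1 := by linarith
    set g : ℝ → ℝ := fun v =>
      (-2 + ((x - 1 - v ^ 2) / v) ^ 2 + 6 * v ^ 2 + (x - 1 - v ^ 2) * (3 + v ^ 2)) / 2 with hg
    have hcont : ContinuousOn g (Icc (s - 1) 2) := by
      intro v hv
      have hv0 : v ≠ 0 := by have := hv.1; intro h; rw [h] at this; linarith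
      apply ContinuousAt.continuousWithinAt
      have h1 : ContinuousAt (fun v : ℝ => (x - 1 - v ^ 2) / v) v :=
        ContinuousAt.div (by fun_prop) continuousAt_id hv0
      exact (((continuousAt_const.add (h1.pow 2)).add (by fun_prop)).add
        ((by fun_prop : ContinuousAt (fun v : ℝ => x - 1 - v ^ 2) v).mul (by fun_prop))).div_const 2
    have hga : g (s - 1) = s ^ 3 := by
      have h0 : s - 1 ≠ 0 := ne_of_gt hvpos
      rw [hg]; simp only; rw [← hs2]; field_simp; ring
    have hgb : g 2 = (x ^ 2 + 18 * x - 27) / 8 := by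
      simp only [hg]; ring
    have hmem : y ∈ Icc (g 2) (g (s - 1)) := by
      rw [hga, hgb]; exact ⟨by linarith, hys⟩
    obtain ⟨v, hv, hgv⟩ := intermediate_value_Icc' (by linarith : s - 1 ≤ 2) hcont hmem
    have hv0 : 0 < v := lt_of_lt_of_le hvpos hv.1
    have huv : (x - 1 - v ^ 2) / v * v = x - 1 - v ^ 2 := div_mul_cancel₀ _ (ne_of_gt hv0)
    refine ⟨((x - 1 - v ^ 2) / v, v), ⟨⟨?_, ?_⟩, by
      constructor <;> [linarith [hv.1]; linarith [hv.2]]⟩, ?_⟩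
    · rw [le_div_iff₀ hv0]; nlinarith [hv.1, hv.2]
    · rw [div_le_iff₀ hv0]; nlinarith [hv.1, hv.2]
    · simp only [Prod.mk.injEq]
      constructor
      · rw [huv]; ring
      · rw [show (x - 1 - v ^ 2) / v * v * (3 + v ^ 2) = (x - 1 - v ^ 2) * (3 + v ^ 2) by
          rw [huv]]
        simp only [hg] at hgv
        exact hgv

lemma img_eq : (fun uv : ℝ × ℝ =>
        ((1 + uv.1 * uv.2 + uv.2 ^ 2,
          (-2 + uv.1 ^ 2 + 6 * uv.2 ^ 2 + uv.1 * uv.2 * (3 + uv.2 ^ 2)) / 2) : ℝ × ℝ)) ''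
        (Set.Icc (-2 : ℝ) 2 ×ˢ Set.Icc (-2 : ℝ) 2) = Aset :=
  Set.Subset.antisymm img_sub sub_img

lemma dist2 (a b d : ℝ) : dist ((a, b + d) : ℝ × ℝ) (a, b) = |d| := by
  rw [Prod.dist_eq]; simp [Real.dist_eq]

lemma dist1 (a b d : ℝ) : dist ((a + d, b) : ℝ × ℝ) (a, b) = |d| := by
  rw [Prod.dist_eq]; simp [Real.dist_eq]

lemma not_int_1 (t : ℝ) : ((t^2, t^3) : ℝ × ℝ) ∉ interior Aset := by
  intro hint
  rw [mem_interior_iff_mem_nhds, Metric.mem_nhds_iff] at hint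
  obtain ⟨ε, hε, hball⟩ := hint
  have habs : |(-(ε/2))| < ε := by rw [abs_neg, abs_of_pos (by linarith)]; linarith
  have habs' : |ε/2| < ε := by rw [abs_of_pos (by linarith)]; linarith
  rcases lt_trichotomy t 0 with h | h | h
  · have ht3 : t ^ 3 < 0 := by nlinarith [mul_pos (mul_pos (neg_pos.2 h) (neg_pos.2 h)) (neg_pos.2 h)]
    have hmem : ((t^2 : ℝ), t^3 + -(ε/2)) ∈ Aset := by
      apply hball
      rw [Metric.mem_ball, dist2]; exact habs
    obtain ⟨-, h2, -⟩ := hmem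
    simp only at h2
    nlinarith [mul_pos (neg_pos.2 ht3) hε, sq_nonneg ε]
  · have hmem : ((t^2 + -(ε/2) : ℝ), t^3) ∈ Aset := by
      apply hball
      rw [Metric.mem_ball, dist1]; exact habs
    obtain ⟨h1, -, -⟩ := hmem
    simp only at h1
    rw [h] at h1
    norm_num at h1
    linarith
  · have ht3 : 0 < t ^ 3 := pow_pos h 3
    have hmem : ((t^2 : ℝ), t^3 + ε/2) ∈ Aset := by
      apply hball
      rw [Metric.mem_ball, dist2]; exact habs'
    obtain ⟨-, h2, -⟩ := hmem
    simp only at h2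
    nlinarith [mul_pos ht3 hε, sq_nonneg ε]

lemma not_int_2 (x y : ℝ) (hxy : x ^ 2 + 18 * x - 27 = 8 * y) :
    ((x, y) : ℝ × ℝ) ∉ interior Aset := by
  intro hint
  rw [mem_interior_iff_mem_nhds, Metric.mem_nhds_iff] at hint
  obtain ⟨ε, hε, hball⟩ := hint
  have habs : |(-(ε/2))| < ε := by rw [abs_neg, abs_of_pos (by linarith)]; linarith
  have hmem : ((x : ℝ), y + -(ε/2)) ∈ Aset := by
    apply hball
    rw [Metric.mem_ball, dist2]; exact habs
  obtain ⟨-, -, h3⟩ := hmem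
  simp only at h3
  linarith

lemma gam_not_int {w : ℝ × ℝ} (hw : w ∈ Gam) : w ∉ interior Aset := by
  rcases hw with ⟨θ, rfl⟩ | ⟨θ, rfl⟩
  · exact not_int_1 _
  · exact not_int_2 _ _ (by ring)

lemma gam_sub_A : Gam ⊆ Aset := by
  rintro w (⟨θ, rfl⟩ | ⟨θ, rfl⟩) <;>
    have h1 := Real.neg_one_le_cos θ <;> have h2 := Real.cos_le_one θ
  · set t := 1 + 2 * Real.cos θ with ht
    have ht1 : -1 ≤ t := by rw [ht]; linarith
    have ht3 : t ≤ 3 := by rw [ht]; linarith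
    refine ⟨by positivity, le_of_eq (by ring), ?_⟩
    simp only
    nlinarith [mul_nonneg (pow_nonneg (show (0:ℝ) ≤ 3 - t by linarith) 3)
      (show (0:ℝ) ≤ t + 1 by linarith)]
  · refine ⟨by simp only; linarith, ?_, le_of_eq (by ring)⟩
    simp only
    nlinarith [mul_nonneg (show (0:ℝ) ≤ 1 + Real.cos θ by linarith)
      (pow_nonneg (show (0:ℝ) ≤ 1 - Real.cos θ by linarith) 3)]

lemma eq_to_gam {w : ℝ × ℝ} (hw : w ∈ Aset)
    (h : w.1 = 0 ∨ w.2 ^ 2 = w.1 ^ 3 ∨ w.1 ^ 2 + 18 * w.1 - 27 = 8 * w.2) : w ∈ Gam := by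
  obtain ⟨hx0, hyx, hq⟩ := hw
  obtain ⟨x, y⟩ := w
  simp only at hx0 hyx hq h ⊢
  set s := Real.sqrt x with hs
  have hs0 : 0 ≤ s := Real.sqrt_nonneg x
  have hs2 : s ^ 2 = x := Real.sq_sqrt hx0
  have hx3 : x ^ 3 = (s ^ 3) ^ 2 := by rw [← hs2]; ring
  have hs30 : 0 ≤ s ^ 3 := pow_nonneg hs0 3
  have hys : y ≤ s ^ 3 := by nlinarith [hx3, hs30]
  have hx9 : x ≤ 9 := by
    by_contra hgt
    push_neg at hgt
    have hs3 : 3 < s := by nlinarith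
    nlinarith [mul_pos (pow_pos (by linarith : (0:ℝ) < s - 3) 3) (by linarith : (0:ℝ) < s + 1)]
  have hsle3 : s ≤ 3 := by nlinarith
  rcases h with h | h | h
  · subst h
    have hy : y = 0 := by nlinarith [sq_nonneg y]
    subst hy
    left
    exact ⟨Real.arccos (-1/2), by
      rw [Real.cos_arccos (by norm_num) (by norm_num)]; norm_num⟩
  · rcases le_or_gt 0 y with hy | hy
    · have hyy : y = s ^ 3 := by nlinarith [hx3]
      left
      refine ⟨Real.arccos ((s - 1) / 2), ?_⟩
      rw [Real.cos_arccos (by linarith) (by linarith)]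
      have he : 1 + 2 * ((s - 1) / 2) = s := by ring
      rw [he, hs2, hyy]
    · have hyy : y = -s ^ 3 := by nlinarith [hx3]
      have hs1 : s ≤ 1 := by
        by_contra hgt
        push_neg at hgt
        nlinarith [mul_pos (by linarith : (0:ℝ) < s - 1) (pow_pos (by linarith : (0:ℝ) < s + 3) 3)]
      left
      refine ⟨Real.arccos ((-s - 1) / 2), ?_⟩
      rw [Real.cos_arccos (by linarith) (by linarith)]
      have he : 1 + 2 * ((-s - 1) / 2) = -s := by ring
      rw [he]
      have hh1 : (-s) ^ 2 = x := by rw [← hs2]; ring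
      have hh2 : (-s) ^ 3 = y := by rw [hyy]; ring
      rw [hh1, hh2]
  · have hkey : (x - 1) * (x - 9) ^ 3 ≤ 0 := by nlinarith [hyx, h]
    have hx1 : 1 ≤ x := by
      by_contra hlt
      push_neg at hlt
      nlinarith [mul_pos (by linarith : (0:ℝ) < 1 - x) (pow_pos (by linarith : (0:ℝ) < 9 - x) 3)]
    right
    refine ⟨Real.arccos ((x - 5) / 4), ?_⟩
    rw [Real.cos_arccos (by linarith) (by linarith)]
    have h5 : 5 + 4 * ((x - 5) / 4) = x := by ring
    rw [h5]
    have hy : y = (x ^ 2 + 18 * x - 27) / 8 := by linarith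
    rw [hy]
    have he : (11 : ℝ) + 14 * ((x - 5) / 4) + 2 * ((x - 5) / 4) ^ 2 = (x ^ 2 + 18 * x - 27) / 8 := by
      ring
    rw [he]

lemma strict_sub_int :
    {w : ℝ × ℝ | 0 < w.1 ∧ w.2 ^ 2 < w.1 ^ 3 ∧ w.1 ^ 2 + 18 * w.1 - 27 < 8 * w.2}
      ⊆ interior Aset := by
  apply interior_maximal
  · intro w ⟨h1, h2, h3⟩; exact ⟨le_of_lt h1, le_of_lt h2, le_of_lt h3⟩
  · have e : {w : ℝ × ℝ | 0 < w.1 ∧ w.2 ^ 2 < w.1 ^ 3 ∧ w.1 ^ 2 + 18 * w.1 - 27 < 8 * w.2}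
        = {w : ℝ × ℝ | 0 < w.1} ∩ ({w | w.2 ^ 2 < w.1 ^ 3} ∩ {w | w.1 ^ 2 + 18 * w.1 - 27 < 8 * w.2}) := by
      ext w; simp [and_assoc]
    rw [e]
    exact (isOpen_lt continuous_const continuous_fst).inter
      ((isOpen_lt (by fun_prop) (by fun_prop)).inter (isOpen_lt (by fun_prop) (by fun_prop)))

theorem frontier_of_image_eq_jordan_curve :
    frontier ((fun uv : ℝ × ℝ =>
        ((1 + uv.1 * uv.2 + uv.2 ^ 2,
          (-2 + uv.1 ^ 2 + 6 * uv.2 ^ 2 + uv.1 * uv.2 * (3 + uv.2 ^ 2)) / 2) : ℝ × ℝ)) ''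
        (Set.Icc (-2 : ℝ) 2 ×ˢ Set.Icc (-2 : ℝ) 2))
      = {w : ℝ × ℝ | ∃ θ : ℝ,
            w = ((1 + 2 * Real.cos θ) ^ 2, (1 + 2 * Real.cos θ) ^ 3)} ∪
        {w : ℝ × ℝ | ∃ θ : ℝ,
            w = (5 + 4 * Real.cos θ, 11 + 14 * Real.cos θ + 2 * Real.cos θ ^ 2)} := by
  rw [img_eq]
  show frontier Aset = Gam
  rw [Aset_closed.frontier_eq]
  ext w
  constructor
  · rintro ⟨hwA, hwni⟩
    by_contra hng
    apply hwni
    apply strict_sub_int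
    obtain ⟨h1, h2, h3⟩ := hwA
    refine ⟨?_, ?_, ?_⟩
    · rcases lt_or_eq_of_le h1 with h | h
      · exact h
      · exact absurd (eq_to_gam ⟨h1, h2, h3⟩ (Or.inl h.symm)) hng
    · rcases lt_or_eq_of_le h2 with h | h
      · exact h
      · exact absurd (eq_to_gam ⟨h1, h2, h3⟩ (Or.inr (Or.inl h))) hng
    · rcases lt_or_eq_of_le h3 with h | h
      · exact h
      · exact absurd (eq_to_gam ⟨h1, h2, h3⟩ (Or.inr (Or.inr h))) hng
  · intro hw
    exact ⟨gam_sub_A hw, gam_not_int hw⟩
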